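/- arXiv:2005.01032 — 2 statements merged into one kernel-verified Lean document; each statement's English description precedes it below -/
import Mathlib

section
/- Define a_k(t) = (1/2π)∫₀^{2π} cos(2ω₁ t sin(λ/2)) e^{ikλ} dλ for k ∈ ℤ. Then a_k satisfies ä_k(t) = ω₁²(a_{k+1}(t) - 2a_k(t) + a_{k-1}(t)) for all t, with a_0(0) = 1 and a_k(0) = 0 for k ≠ 0. -/
open MeasureTheory

/-- Fourier coefficient `a_k(t)` of `cos(2ω₁ t sin(λ/2))`. -/
noncomputable def acoef (ω₁ : ℝ) (k : ℤ) (t : ℝ) : ℂ :=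
  ((1 / (2 * Real.pi) : ℝ) : ℂ) * ∫ l in (0:ℝ)..(2 * Real.pi),
    (Real.cos (2 * ω₁ * t * Real.sin (l / 2)) : ℂ) * Complex.exp (Complex.I * k * l)

/-! Differentiating twice in `t` under the integral sign multiplies the integrand by
`-(2 ω₁ sin (λ/2))²`, and `-4 sin² (λ/2) e^{ikλ} = e^{i(k+1)λ} - 2 e^{ikλ} + e^{i(k-1)λ}`, so the
second derivative of `a_k` is `ω₁²` times the second difference of `a_k` in `k`. At `t = 0` the
integrand is `e^{ikλ}`, whose integral over a period vanishes unless `k = 0`. -/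

open Complex intervalIntegral

theorem hasDerivAt_intervalIntegral_comp_mul {g g' c : ℝ → ℝ} {w : ℝ → ℂ} {C : ℝ}
    (hg : ∀ x, HasDerivAt g (g' x) x) (hg' : Continuous g') (hC : ∀ x, |g' x| ≤ C)
    (hc : Continuous c) (hw : Continuous w) (a b t : ℝ) :
    HasDerivAt (fun s => ∫ l in a..b, (g (s * c l) : ℂ) * w l)
      (∫ l in a..b, (g' (t * c l) : ℂ) * (c l * w l)) t := by
  have hg_cont : Continuous g := continuous_iff_continuousAt.2 fun x => (hg x).continuousAt
  refine (intervalIntegral.hasDerivAt_integral_of_dominated_loc_of_deriv_le (μ := volume)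
    (F := fun s l => (g (s * c l) : ℂ) * w l) (F' := fun s l => (g' (s * c l) : ℂ) * (c l * w l))
    (bound := fun l => C * ‖c l * w l‖)
    Filter.univ_mem ?_ ?_ ?_ ?_ ?_ ?_).2
  · exact .of_forall fun s => (by fun_prop : Continuous _).aestronglyMeasurable
  · exact (by fun_prop : Continuous _).intervalIntegrable _ _
  · exact (by fun_prop : Continuous _).aestronglyMeasurable
  · refine ae_of_all _ fun l _ s _ => ?_
    rw [norm_mul, norm_real, Real.norm_eq_abs]
    exact mul_le_mul_of_nonneg_right (hC _) (norm_nonneg _)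
  · exact (by fun_prop : Continuous _).intervalIntegrable _ _
  · refine ae_of_all _ fun l _ s _ => ?_
    have hinner : HasDerivAt (fun s => g (s * c l)) (g' (s * c l) * c l) s :=
      (hg (s * c l)).comp s (hasDerivAt_mul_const (c l))
    simpa [mul_assoc] using hinner.ofReal_comp.mul_const (w l)

theorem cexp_I_mul_int_second_difference (k : ℤ) (l : ℝ) :
    cexp (I * ↑(k + 1) * l) - 2 * cexp (I * k * l) + cexp (I * ↑(k - 1) * l) =
      -(2 * Real.sin (l / 2)) ^ 2 * cexp (I * k * l) := by
  set E := cexp (I * k * l)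
  set u := cexp (l / 2 * I)
  set v := cexp (-(l / 2) * I)
  have hsucc : cexp (I * ↑(k + 1) * l) = E * u ^ 2 := by
    rw [sq, ← exp_add, ← exp_add]; congr 1; push_cast; ring
  have hpred : cexp (I * ↑(k - 1) * l) = E * v ^ 2 := by
    rw [sq, ← exp_add, ← exp_add]; congr 1; push_cast; ring
  have hsin : (2 * Real.sin (l / 2) : ℂ) * I = u - v := by
    rw [ofReal_sin, sin]; push_cast; linear_combination -(u - v) * I_sq
  have huv : u * v = 1 := by rw [← exp_add, ← exp_zero]; congr 1; ring
  rw [hsucc, hpred]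
  linear_combination (-E * (2 * Real.sin (l / 2) * I + u - v)) * hsin + 2 * E * huv
    + E * (2 * Real.sin (l / 2)) ^ 2 * I_sq

theorem integral_cexp_I_mul_int (k : ℤ) :
    ∫ l in (0 : ℝ)..2 * Real.pi, cexp (I * k * l) = if k = 0 then 2 * Real.pi else 0 := by
  split_ifs with hk
  · simp [hk]
  · have hc : I * k ≠ 0 := by simp [hk]
    rw [integral_exp_mul_complex hc]
    have hperiod : cexp (I * k * (2 * Real.pi)) = 1 := by
      rw [← exp_int_mul_two_pi_mul_I k]; ring_nf
    simp [hperiod]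

section

variable (ω₁ : ℝ) (k : ℤ)

theorem acoef_eq_integral_cos_mul :
    acoef ω₁ k = fun s => ((1 / (2 * Real.pi) : ℝ) : ℂ) * ∫ l in (0 : ℝ)..2 * Real.pi,
      (Real.cos (s * (2 * ω₁ * Real.sin (l / 2))) : ℂ) * cexp (I * k * l) := by
  ext s
  simp only [acoef, mul_comm s, mul_assoc]

theorem hasDerivAt_acoef (t : ℝ) :
    HasDerivAt (acoef ω₁ k) (((1 / (2 * Real.pi) : ℝ) : ℂ) * ∫ l in (0 : ℝ)..2 * Real.pi,
      ((-Real.sin (t * (2 * ω₁ * Real.sin (l / 2))) : ℝ) : ℂ) *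
        ((2 * ω₁ * Real.sin (l / 2) : ℝ) * cexp (I * k * l))) t := by
  rw [acoef_eq_integral_cos_mul]
  refine .const_mul _ (hasDerivAt_intervalIntegral_comp_mul (g' := fun x => -Real.sin x) (C := 1)
    (c := fun l => 2 * ω₁ * Real.sin (l / 2)) (w := fun l => cexp (I * k * l))
    Real.hasDerivAt_cos (by fun_prop) (fun x => ?_) (by fun_prop) (by fun_prop) _ _ t)
  simpa using Real.abs_sin_le_one x

theorem hasDerivAt_deriv_acoef (t : ℝ) :
    HasDerivAt (deriv (acoef ω₁ k)) (((1 / (2 * Real.pi) : ℝ) : ℂ) * ∫ l in (0 : ℝ)..2 * Real.pi,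
      ((-Real.cos (t * (2 * ω₁ * Real.sin (l / 2))) : ℝ) : ℂ) *
        ((2 * ω₁ * Real.sin (l / 2) : ℝ) *
          ((2 * ω₁ * Real.sin (l / 2) : ℝ) * cexp (I * k * l)))) t := by
  rw [show deriv (acoef ω₁ k) = _ from funext fun s => (hasDerivAt_acoef ω₁ k s).deriv]
  refine .const_mul _ (hasDerivAt_intervalIntegral_comp_mul (g := fun x => -Real.sin x)
    (g' := fun x => -Real.cos x) (C := 1) (c := fun l => 2 * ω₁ * Real.sin (l / 2))
    (w := fun l => ((2 * ω₁ * Real.sin (l / 2) : ℝ) : ℂ) * cexp (I * k * l))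
    (fun x => (Real.hasDerivAt_sin x).neg) (by fun_prop) (fun x => ?_) (by fun_prop) (by fun_prop)
    _ _ t)
  simpa using Real.abs_cos_le_one x

theorem deriv_deriv_acoef (t : ℝ) :
    deriv (deriv (acoef ω₁ k)) t =
      (ω₁ ^ 2 : ℂ) * (acoef ω₁ (k + 1) t - 2 * acoef ω₁ k t + acoef ω₁ (k - 1) t) := by
  set f : ℤ → ℝ → ℂ := fun j l => (Real.cos (2 * ω₁ * t * Real.sin (l / 2)) : ℂ) * cexp (I * j * l)
  have hf : ∀ j, IntervalIntegrable (f j) volume 0 (2 * Real.pi) := fun j =>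
    (by fun_prop : Continuous (f j)).intervalIntegrable _ _
  have hpoint : ∀ l : ℝ, ((-Real.cos (t * (2 * ω₁ * Real.sin (l / 2))) : ℝ) : ℂ) *
      ((2 * ω₁ * Real.sin (l / 2) : ℝ) * ((2 * ω₁ * Real.sin (l / 2) : ℝ) * cexp (I * k * l))) =
      ω₁ ^ 2 * (f (k + 1) l - 2 * f k l + f (k - 1) l) := fun l => by
    rw [show t * (2 * ω₁ * Real.sin (l / 2)) = 2 * ω₁ * t * Real.sin (l / 2) by ring]
    simp only [f, ofReal_neg, ofReal_mul, ofReal_ofNat]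
    linear_combination (-ω₁ ^ 2 * Real.cos (2 * ω₁ * t * Real.sin (l / 2)) : ℂ) *
      cexp_I_mul_int_second_difference k l
  rw [(hasDerivAt_deriv_acoef ω₁ k t).deriv, integral_congr fun l _ => hpoint l,
    intervalIntegral.integral_const_mul, integral_add ((hf _).sub ((hf _).const_mul 2)) (hf _),
    integral_sub (hf _) ((hf _).const_mul 2), intervalIntegral.integral_const_mul]
  simp only [acoef, f]
  ring

theorem acoef_zero_right : acoef ω₁ k 0 = if k = 0 then 1 else 0 := by
  simp only [acoef, mul_zero, zero_mul, Real.cos_zero, ofReal_one, one_mul,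
    integral_cexp_I_mul_int]
  split_ifs
  · push_cast
    field_simp [Real.pi_ne_zero]
  · exact mul_zero _

end

theorem stmt1_general (ω₁ : ℝ) :
    (∀ k : ℤ, ∀ t : ℝ,
      deriv (deriv (fun s => acoef ω₁ k s)) t =
        (ω₁^2 : ℂ) * (acoef ω₁ (k+1) t - 2 * acoef ω₁ k t + acoef ω₁ (k-1) t)) ∧
    acoef ω₁ 0 0 = 1 ∧ (∀ k : ℤ, k ≠ 0 → acoef ω₁ k 0 = 0) :=
  ⟨deriv_deriv_acoef ω₁, by simp [acoef_zero_right], fun k hk => by simp [acoef_zero_right, hk]⟩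

theorem stmt1 (ω₁ : ℝ) (hω : 0 < ω₁) :
    (∀ k : ℤ, ∀ t : ℝ,
      deriv (deriv (fun s => acoef ω₁ k s)) t =
        (ω₁^2 : ℂ) * (acoef ω₁ (k+1) t - 2 * acoef ω₁ k t + acoef ω₁ (k-1) t)) ∧
    acoef ω₁ 0 0 = 1 ∧ (∀ k : ℤ, k ≠ 0 → acoef ω₁ k 0 = 0) :=
  stmt1_general ω₁
end

section
/- Let V be the operator (Vq)_k = -ω₁²(q_{k+1}-2q_k+q_{k-1}) on l^∞(ℤ) and C(t) = cos(t√V) defined by the power series Σ_{k≥0}(-1)^k t^{2k}V^k/(2k)!. Then there exists b > 0 such that for all t ≥ 0, ‖C(t)‖_{op} ≤ b√t + 1. -/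
/-!
`V ^ k` acts on `ℓ^∞(ℤ)` by correlation with a kernel supported in `[-k, k]` whose cosine
transform is the `k`-th power of the symbol `2 ω₁² (1 - cos θ)` of `V`. Truncate the cosine
series after `N ≈ 6 ω₁ t` terms: the remainder is dominated by the tail of `cosh (2 ω₁ t)`,
which is `O(1)` from that index on. The truncation acts by correlation with a kernel `p`
supported in `[-N, N]` whose cosine transform is a Taylor polynomial of `cos (t √symbol)`, hence
bounded; by Parseval `∑ p_j²` is bounded, and Cauchy–Schwarz gives `‖p‖₁ = O(√N) = O(√t)`.
For `t ≤ 1`, truncating after the first term gives `1 + O(t)` instead.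
-/

open Real Finset
open scoped lp ENNReal

namespace HarmonicChain

section Kernel

variable (ω₁ : ℝ)

def powKernel : ℕ → ℤ → ℝ
  | 0 => fun j => if j = 0 then 1 else 0
  | k + 1 => fun j => -ω₁ ^ 2 * (powKernel k (j + 1) - 2 * powKernel k j + powKernel k (j - 1))

theorem powKernel_eq_zero : ∀ {k : ℕ} {j : ℤ}, k < j.natAbs → powKernel ω₁ k j = 0
  | 0, j, h => if_neg (by omega)
  | k + 1, j, h => by
    simp only [powKernel, powKernel_eq_zero (k := k) (j := j + 1) (by omega),
      powKernel_eq_zero (k := k) (j := j) (by omega),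
      powKernel_eq_zero (k := k) (j := j - 1) (by omega)]
    ring

theorem powKernel_neg : ∀ (k : ℕ) (j : ℤ), powKernel ω₁ k (-j) = powKernel ω₁ k j
  | 0, j => by simp [powKernel]
  | k + 1, j => by
    simp only [powKernel, show -j + 1 = -(j - 1) by ring, show -j - 1 = -(j + 1) by ring,
      powKernel_neg k]
    ring

theorem tsum_powKernel_mul_eq_sum {k n : ℕ} (hkn : k ≤ n) (φ : ℤ → ℝ) :
    ∑' j, powKernel ω₁ k j * φ j = ∑ j ∈ Icc (-(n : ℤ)) n, powKernel ω₁ k j * φ j :=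
  tsum_eq_sum fun j hj => by
    rw [powKernel_eq_zero ω₁ (by simp only [mem_Icc] at hj; omega), zero_mul]

theorem summable_powKernel_mul (k : ℕ) (φ : ℤ → ℝ) :
    Summable fun j => powKernel ω₁ k j * φ j :=
  summable_of_ne_finset_zero (s := Icc (-(k : ℤ)) k) fun j hj => by
    rw [powKernel_eq_zero ω₁ (by simp only [mem_Icc] at hj; omega), zero_mul]

-- summation by parts: the second difference is symmetric
theorem tsum_powKernel_succ_mul (k : ℕ) (φ : ℤ → ℝ) :
    ∑' j, powKernel ω₁ (k + 1) j * φ j =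
      ∑' j, powKernel ω₁ k j * (-ω₁ ^ 2 * (φ (j + 1) - 2 * φ j + φ (j - 1))) := by
  set T : ℤ → ℝ := fun d => ∑' j, powKernel ω₁ k j * φ (j + d)
  have hT (d : ℤ) : HasSum (fun j => powKernel ω₁ k j * φ (j + d)) (T d) :=
    (summable_powKernel_mul ω₁ k _).hasSum
  have hshift (d : ℤ) : HasSum (fun j => powKernel ω₁ k (j + d) * φ j) (T (-d)) := by
    rw [← (Equiv.subRight d).hasSum_iff]
    simpa [Function.comp_def, sub_eq_add_neg] using hT (-d)
  have hlhs : HasSum (fun j => powKernel ω₁ (k + 1) j * φ j)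
      (-ω₁ ^ 2 * (T (-1) - 2 * T (-0) + T (-(-1)))) := by
    refine ((((hshift 1).sub ((hshift 0).mul_left 2)).add (hshift (-1))).mul_left _).congr_fun
      fun j => ?_
    simp only [powKernel, add_zero, ← sub_eq_add_neg]
    ring
  have hrhs :
      HasSum (fun j => powKernel ω₁ k j * (-ω₁ ^ 2 * (φ (j + 1) - 2 * φ j + φ (j - 1))))
      (-ω₁ ^ 2 * (T 1 - 2 * T 0 + T (-1))) := by
    refine ((((hT 1).sub ((hT 0).mul_left 2)).add (hT (-1))).mul_left _).congr_fun fun j => ?_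
    simp only [add_zero, ← sub_eq_add_neg]
    ring
  rw [hlhs.tsum_eq, hrhs.tsum_eq, neg_zero, neg_neg]
  ring

noncomputable def symbol (θ : ℝ) : ℝ := 2 * ω₁ ^ 2 * (1 - cos θ)

theorem symbol_pow_eq_tsum (θ : ℝ) (k : ℕ) :
    symbol ω₁ θ ^ k = ∑' j, powKernel ω₁ k j * cos (j * θ) := by
  induction k with
  | zero => simp [powKernel]
  | succ k ih =>
    rw [tsum_powKernel_succ_mul, pow_succ, ih, ← tsum_mul_right]
    refine tsum_congr fun j => ?_
    push_cast
    rw [add_mul, sub_mul, one_mul, cos_add, cos_sub, symbol]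
    ring

theorem symbol_nonneg (θ : ℝ) : 0 ≤ symbol ω₁ θ :=
  mul_nonneg (by positivity) (sub_nonneg.2 (cos_le_one θ))

theorem symbol_le (θ : ℝ) : symbol ω₁ θ ≤ 4 * ω₁ ^ 2 := by
  rw [symbol]
  nlinarith [neg_one_le_cos θ, sq_nonneg ω₁]

end Kernel

section CosSeries

noncomputable def cosCoeff (t : ℝ) (k : ℕ) : ℝ := (-1) ^ k * t ^ (2 * k) / (2 * k).factorial

noncomputable def cosTail (x : ℝ) (N : ℕ) : ℝ := ∑' k, x ^ (2 * (k + N)) / (2 * (k + N)).factorial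

theorem summable_cosTail_term (x : ℝ) (N : ℕ) :
    Summable fun k => x ^ (2 * (k + N)) / (2 * (k + N)).factorial :=
  (summable_nat_add_iff N).2 (Real.hasSum_cosh x).summable

theorem abs_cosCoeff_mul_pow_le {t x r : ℝ} (hr : 0 ≤ r) (h : t ^ 2 * r ≤ x ^ 2) (k : ℕ) :
    |cosCoeff t k| * r ^ k ≤ x ^ (2 * k) / (2 * k).factorial := by
  have habs : |cosCoeff t k| = (t ^ 2) ^ k / (2 * k).factorial := by
    rw [cosCoeff, abs_div, abs_mul, abs_pow, abs_neg, abs_one, one_pow, one_mul, Nat.abs_cast,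
      pow_mul, abs_pow, abs_sq]
  rw [habs, div_mul_eq_mul_div, ← mul_pow, pow_mul]
  gcongr

theorem norm_tsum_sub_sum_le {A : Type*} [NormedRing A] [NormedAlgebra ℝ A] [CompleteSpace A]
    (a : A) {t x : ℝ} (h : t ^ 2 * ‖a‖ ≤ x ^ 2) {N : ℕ} (hN : 0 < N) :
    ‖∑' k, cosCoeff t k • a ^ k - ∑ k ∈ range N, cosCoeff t k • a ^ k‖ ≤ cosTail x N := by
  have hbound (k : ℕ) : ‖cosCoeff t (k + N) • a ^ (k + N)‖ ≤
      x ^ (2 * (k + N)) / (2 * (k + N)).factorial := by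
    rw [norm_smul, Real.norm_eq_abs]
    refine le_trans ?_ (abs_cosCoeff_mul_pow_le (norm_nonneg a) h (k + N))
    gcongr
    exact norm_pow_le' a (by omega)
  have hsum : Summable fun k => cosCoeff t k • a ^ k :=
    (summable_nat_add_iff N).1 ((summable_cosTail_term x N).of_norm_bounded hbound)
  rw [← hsum.sum_add_tsum_nat_add N, add_sub_cancel_left]
  exact tsum_of_norm_bounded (summable_cosTail_term x N).hasSum hbound

theorem abs_cos_sub_sum_le {t x r : ℝ} (hr : 0 ≤ r) (h : t ^ 2 * r ≤ x ^ 2) {N : ℕ} (hN : 0 < N) :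
    |cos (t * √r) - ∑ k ∈ range N, cosCoeff t k * r ^ k| ≤ cosTail x N := by
  have hcos : cos (t * √r) = ∑' k, cosCoeff t k • r ^ k := by
    rw [cos_eq_tsum]
    refine tsum_congr fun k => ?_
    rw [cosCoeff, smul_eq_mul, mul_pow, pow_mul √r, sq_sqrt hr]
    ring
  have := norm_tsum_sub_sum_le r (by rwa [Real.norm_eq_abs, abs_of_nonneg hr]) hN
  simpa only [hcos, smul_eq_mul, Real.norm_eq_abs] using this

theorem pow_div_factorial_le_quarter_pow {x : ℝ} (hx : 0 ≤ x) {n : ℕ} (hn : 3 * x ≤ n) :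
    x ^ (2 * n) / (2 * n).factorial ≤ (1 / 4) ^ n := by
  have he : exp 1 ≤ 3 := exp_one_lt_d9.le.trans (by norm_num)
  -- `m ^ m ≤ m! e ^ m` for `m = 2n`, and `2 e x ≤ 6 x ≤ m`
  have hstirling : (2 * x) ^ (2 * n) * exp 1 ^ (2 * n) ≤ (2 * n).factorial * exp 1 ^ (2 * n) :=
    calc (2 * x) ^ (2 * n) * exp 1 ^ (2 * n)
        ≤ ((2 * n : ℕ) : ℝ) ^ (2 * n) := by
          rw [← mul_pow]
          gcongr
          push_cast
          nlinarith
      _ ≤ (2 * n).factorial * exp 1 ^ (2 * n) := by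
          have := pow_div_factorial_le_exp (x := ((2 * n : ℕ) : ℝ)) (by positivity) (2 * n)
          rw [exp_one_pow]
          linarith [(div_le_iff₀ (by positivity)).1 this]
  have hfac := le_of_mul_le_mul_right hstirling (by positivity)
  rw [div_le_iff₀ (by positivity)]
  calc x ^ (2 * n) = (1 / 4) ^ n * (2 * x) ^ (2 * n) := by
        rw [mul_pow, pow_mul (2 : ℝ), ← mul_assoc, ← mul_pow]; norm_num
    _ ≤ (1 / 4) ^ n * (2 * n).factorial := by gcongr

theorem cosTail_le {x : ℝ} (hx : 0 ≤ x) {N : ℕ} (hN : 3 * x ≤ N) : cosTail x N ≤ 4 / 3 := by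
  have hgeom := hasSum_geometric_of_lt_one (r := (1 / 4 : ℝ)) (by norm_num) (by norm_num)
  calc cosTail x N ≤ ∑' k : ℕ, (1 / 4 : ℝ) ^ k := by
        refine (summable_cosTail_term x N).tsum_le_tsum (fun k => ?_) hgeom.summable
        refine (pow_div_factorial_le_quarter_pow hx (hN.trans (by simp))).trans ?_
        exact pow_le_pow_of_le_one (by norm_num) (by norm_num) (by omega)
    _ = 4 / 3 := by rw [hgeom.tsum_eq]; norm_num

theorem cosTail_mul_le {t : ℝ} (ht : 0 ≤ t) (ht1 : t ≤ 1) (x : ℝ) :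
    cosTail (t * x) 1 ≤ t * cosTail x 1 := by
  rw [cosTail, cosTail, ← tsum_mul_left]
  refine (summable_cosTail_term _ 1).tsum_le_tsum (fun k => ?_)
    ((summable_cosTail_term x 1).mul_left t)
  rw [mul_pow, mul_div_assoc]
  gcongr
  · rw [pow_mul]; positivity
  · exact pow_le_of_le_one ht ht1 (by omega)

theorem cosTail_nonneg (x : ℝ) (N : ℕ) : 0 ≤ cosTail x N :=
  tsum_nonneg fun k => by rw [pow_mul]; positivity

end CosSeries

section Parseval

theorem integral_cos_int_mul (j : ℤ) :
    ∫ θ in (0 : ℝ)..2 * π, cos (j * θ) = if j = 0 then 2 * π else 0 := by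
  split_ifs with hj
  · simp [hj]
  · have hj' : (j : ℝ) ≠ 0 := Int.cast_ne_zero.2 hj
    have hsin : sin (j * (2 * π)) = 0 := by
      simpa [mul_left_comm, mul_assoc] using sin_int_mul_pi (2 * j)
    simp [intervalIntegral.integral_comp_mul_left _ hj', hsin]

theorem integral_cos_mul_cos (i j : ℤ) :
    ∫ θ in (0 : ℝ)..2 * π, cos (i * θ) * cos (j * θ) =
      π * ((if i = j then 1 else 0) + (if j = -i then 1 else 0)) := by
  have hprod (θ : ℝ) : cos (i * θ) * cos (j * θ) =
      cos (((i - j : ℤ) : ℝ) * θ) / 2 + cos (((i + j : ℤ) : ℝ) * θ) / 2 := by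
    push_cast
    rw [sub_mul, add_mul, cos_sub, cos_add]
    ring
  simp_rw [hprod]
  rw [intervalIntegral.integral_add (by apply Continuous.intervalIntegrable; fun_prop)
    (by apply Continuous.intervalIntegrable; fun_prop), intervalIntegral.integral_div,
    intervalIntegral.integral_div, integral_cos_int_mul, integral_cos_int_mul]
  split_ifs <;> first | omega | ring

theorem integral_sq_sum_mul_cos {s : Finset ℤ} (hs : ∀ j ∈ s, -j ∈ s) {p : ℤ → ℝ}
    (hp : ∀ j, p (-j) = p j) :
    ∫ θ in (0 : ℝ)..2 * π, (∑ j ∈ s, p j * cos (j * θ)) ^ 2 = 2 * π * ∑ j ∈ s, p j ^ 2 := by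
  have hint (i j : ℤ) : ∫ θ in (0 : ℝ)..2 * π, p i * cos (i * θ) * (p j * cos (j * θ)) =
      p i * p j * (π * ((if i = j then 1 else 0) + (if j = -i then 1 else 0))) := by
    rw [← integral_cos_mul_cos, ← intervalIntegral.integral_const_mul]
    exact intervalIntegral.integral_congr fun θ _ => by ring
  simp_rw [sq, sum_mul_sum]
  rw [intervalIntegral.integral_finsetSum fun i _ => by
    apply Continuous.intervalIntegrable; fun_prop, mul_sum]
  refine sum_congr rfl fun i hi => ?_
  rw [intervalIntegral.integral_finsetSum fun j _ => by
    apply Continuous.intervalIntegrable; fun_prop]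
  simp only [hint, mul_add, mul_ite, mul_one, mul_zero, sum_add_distrib, sum_ite_eq, hi,
    ↓reduceIte, sum_ite_eq', hs i hi, hp]
  ring

theorem sum_abs_le_sqrt_card_mul {s : Finset ℤ} (hs : ∀ j ∈ s, -j ∈ s) {p : ℤ → ℝ}
    (hp : ∀ j, p (-j) = p j) {M : ℝ} (hM : ∀ θ, |∑ j ∈ s, p j * cos (j * θ)| ≤ M) :
    ∑ j ∈ s, |p j| ≤ √(#s) * M := by
  have hM0 : 0 ≤ M := (abs_nonneg _).trans (hM 0)
  have hsq : ∑ j ∈ s, p j ^ 2 ≤ M ^ 2 := by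
    have hmono : ∫ θ in (0 : ℝ)..2 * π, (∑ j ∈ s, p j * cos (j * θ)) ^ 2 ≤
        ∫ θ in (0 : ℝ)..2 * π, M ^ 2 :=
      intervalIntegral.integral_mono_on (by positivity)
        (by apply Continuous.intervalIntegrable; fun_prop) intervalIntegrable_const
        fun θ _ => sq_le_sq' (abs_le.1 (hM θ)).1 (abs_le.1 (hM θ)).2
    rw [integral_sq_sum_mul_cos hs hp, intervalIntegral.integral_const, smul_eq_mul, sub_zero]
      at hmono
    exact le_of_mul_le_mul_left hmono (by positivity)
  calc ∑ j ∈ s, |p j| = √((∑ j ∈ s, |p j|) ^ 2) := (sqrt_sq (by positivity)).symm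
    _ ≤ √(#s * M ^ 2) := by
        gcongr
        refine (sq_sum_le_card_mul_sum_sq).trans ?_
        simp only [sq_abs]
        gcongr
    _ = √(#s) * M := by rw [sqrt_mul (by positivity), sqrt_sq hM0]

end Parseval

section Operator

def IsNegLaplacian (ω₁ : ℝ) (V : ℓ^∞(ℤ, ℝ) →L[ℝ] ℓ^∞(ℤ, ℝ)) : Prop :=
  ∀ (q : ℓ^∞(ℤ, ℝ)) (k : ℤ),
    (V q : ℤ → ℝ) k = -ω₁ ^ 2 * ((q : ℤ → ℝ) (k + 1) - 2 * (q : ℤ → ℝ) k + (q : ℤ → ℝ) (k - 1))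

variable {ω₁ : ℝ} {V : ℓ^∞(ℤ, ℝ) →L[ℝ] ℓ^∞(ℤ, ℝ)}

theorem IsNegLaplacian.pow_apply (hV : IsNegLaplacian ω₁ V) (k : ℕ) (q : ℓ^∞(ℤ, ℝ)) (m : ℤ) :
    ((V ^ k) q : ℤ → ℝ) m = ∑' j, powKernel ω₁ k j * (q : ℤ → ℝ) (m + j) := by
  induction k generalizing q with
  | zero => simp [powKernel]
  | succ k ih =>
    rw [tsum_powKernel_succ_mul, pow_succ, mul_apply_eq_comp, ih]
    refine tsum_congr fun j => ?_
    rw [hV, add_assoc, add_sub_assoc]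

theorem IsNegLaplacian.norm_le (hV : IsNegLaplacian ω₁ V) : ‖V‖ ≤ 4 * ω₁ ^ 2 := by
  refine ContinuousLinearMap.opNorm_le_bound _ (by positivity) fun q => ?_
  refine lp.norm_le_of_forall_le (by positivity) fun m => ?_
  have hq (i : ℤ) : |(q : ℤ → ℝ) i| ≤ ‖q‖ := lp.norm_apply_le_norm ENNReal.top_ne_zero q i
  rw [hV, Real.norm_eq_abs, abs_mul, abs_neg, abs_sq]
  have := abs_add_three ((q : ℤ → ℝ) (m + 1)) (-(2 * (q : ℤ → ℝ) m)) ((q : ℤ → ℝ) (m - 1))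
  rw [abs_neg, abs_mul, abs_two, ← sub_eq_add_neg] at this
  calc ω₁ ^ 2 * |(q : ℤ → ℝ) (m + 1) - 2 * (q : ℤ → ℝ) m + (q : ℤ → ℝ) (m - 1)|
      ≤ ω₁ ^ 2 * (4 * ‖q‖) := by
        gcongr
        linarith [hq (m + 1), hq m, hq (m - 1)]
    _ = 4 * ω₁ ^ 2 * ‖q‖ := by ring

theorem norm_le_sum_abs {T : ℓ^∞(ℤ, ℝ) →L[ℝ] ℓ^∞(ℤ, ℝ)} {s : Finset ℤ} {p : ℤ → ℝ}
    (hT : ∀ (q : ℓ^∞(ℤ, ℝ)) (m : ℤ), (T q : ℤ → ℝ) m = ∑ j ∈ s, p j * (q : ℤ → ℝ) (m + j)) :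
    ‖T‖ ≤ ∑ j ∈ s, |p j| := by
  refine ContinuousLinearMap.opNorm_le_bound _ (by positivity) fun q => ?_
  refine lp.norm_le_of_forall_le (by positivity) fun m => ?_
  rw [hT, Real.norm_eq_abs, sum_mul]
  refine (abs_sum_le_sum_abs _ _).trans (sum_le_sum fun j _ => ?_)
  rw [abs_mul]
  gcongr
  exact lp.norm_apply_le_norm ENNReal.top_ne_zero q (m + j)

variable (ω₁) in
noncomputable def cosKernel (t : ℝ) (N : ℕ) (j : ℤ) : ℝ :=
  ∑ k ∈ range N, cosCoeff t k * powKernel ω₁ k j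

theorem cosKernel_neg (t : ℝ) (N : ℕ) (j : ℤ) : cosKernel ω₁ t N (-j) = cosKernel ω₁ t N j := by
  simp only [cosKernel, powKernel_neg]

theorem sum_cosKernel_mul_cos (t : ℝ) (N : ℕ) (θ : ℝ) :
    ∑ j ∈ Icc (-(N : ℤ)) N, cosKernel ω₁ t N j * cos (j * θ) =
      ∑ k ∈ range N, cosCoeff t k * symbol ω₁ θ ^ k := by
  simp_rw [cosKernel, sum_mul]
  rw [sum_comm]
  refine sum_congr rfl fun k hk => ?_
  rw [symbol_pow_eq_tsum, tsum_powKernel_mul_eq_sum ω₁ (mem_range.1 hk).le, mul_sum]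
  exact sum_congr rfl fun j _ => by ring

theorem IsNegLaplacian.sum_smul_pow_apply (hV : IsNegLaplacian ω₁ V)
    (t : ℝ) (N : ℕ) (q : ℓ^∞(ℤ, ℝ)) (m : ℤ) :
    ((∑ k ∈ range N, cosCoeff t k • V ^ k) q : ℤ → ℝ) m =
      ∑ j ∈ Icc (-(N : ℤ)) N, cosKernel ω₁ t N j * (q : ℤ → ℝ) (m + j) := by
  rw [_root_.sum_apply, lp.coeFn_sum, Finset.sum_apply]
  simp_rw [cosKernel, sum_mul]
  rw [sum_comm]
  refine sum_congr rfl fun k hk => ?_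
  rw [smul_apply, lp.coeFn_smul, Pi.smul_apply, hV.pow_apply,
    tsum_powKernel_mul_eq_sum ω₁ (mem_range.1 hk).le, smul_eq_mul, mul_sum]
  exact sum_congr rfl fun j _ => by ring

theorem IsNegLaplacian.norm_sum_smul_pow_le (hV : IsNegLaplacian ω₁ V)
    (t : ℝ) {N : ℕ} (hN : 0 < N) :
    ‖∑ k ∈ range N, cosCoeff t k • V ^ k‖ ≤ √(2 * N + 1) * (1 + cosTail (2 * ω₁ * t) N) := by
  have hcard : (#(Icc (-(N : ℤ)) N) : ℝ) = 2 * N + 1 := by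
    rw [Int.card_Icc, show (N : ℤ) + 1 - -N = ((2 * N + 1 : ℕ) : ℤ) by push_cast; ring,
      Int.toNat_natCast]
    push_cast; ring
  refine (norm_le_sum_abs (hV.sum_smul_pow_apply t N)).trans ?_
  rw [← hcard]
  refine sum_abs_le_sqrt_card_mul (fun j hj => by simp only [mem_Icc] at hj ⊢; omega)
    (cosKernel_neg t N) fun θ => ?_
  rw [sum_cosKernel_mul_cos]
  have hsymbol : t ^ 2 * symbol ω₁ θ ≤ (2 * ω₁ * t) ^ 2 := by
    nlinarith [symbol_le ω₁ θ, sq_nonneg t]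
  have hdiff := abs_cos_sub_sum_le (symbol_nonneg ω₁ θ) hsymbol hN
  have htri := abs_sub_abs_le_abs_sub (∑ k ∈ range N, cosCoeff t k * symbol ω₁ θ ^ k)
    (cos (t * √(symbol ω₁ θ)))
  rw [abs_sub_comm] at htri
  linarith [abs_cos_le_one (t * √(symbol ω₁ θ))]

theorem IsNegLaplacian.sq_mul_norm_le (hV : IsNegLaplacian ω₁ V) (t : ℝ) :
    t ^ 2 * ‖V‖ ≤ (2 * ω₁ * t) ^ 2 := by
  nlinarith [hV.norm_le, sq_nonneg t]

theorem IsNegLaplacian.norm_tsum_le_of_le_one (hV : IsNegLaplacian ω₁ V)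
    {t : ℝ} (ht : 0 ≤ t) (ht1 : t ≤ 1) :
    ‖∑' k, cosCoeff t k • V ^ k‖ ≤ cosTail (2 * ω₁) 1 * √t + 1 := by
  have hdiff := norm_tsum_sub_sum_le V (hV.sq_mul_norm_le t) one_pos
  rw [show ∑ k ∈ range 1, cosCoeff t k • V ^ k = 1 by simp [cosCoeff]] at hdiff
  have htail : cosTail (2 * ω₁ * t) 1 ≤ cosTail (2 * ω₁) 1 * √t := by
    rw [mul_comm (2 * ω₁), mul_comm (cosTail _ _)]
    refine (cosTail_mul_le ht ht1 _).trans ?_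
    gcongr
    · exact cosTail_nonneg _ _
    · exact (le_sqrt ht ht).2 (by nlinarith)
  have htri := norm_sub_norm_le (∑' k, cosCoeff t k • V ^ k) 1
  have hone : ‖(1 : ℓ^∞(ℤ, ℝ) →L[ℝ] ℓ^∞(ℤ, ℝ))‖ ≤ 1 := ContinuousLinearMap.norm_id_le
  linarith

theorem IsNegLaplacian.norm_tsum_le_of_one_le (hV : IsNegLaplacian ω₁ V)
    (hω : 0 ≤ ω₁) {t : ℝ} (ht1 : 1 ≤ t) :
    ‖∑' k, cosCoeff t k • V ^ k‖ ≤ 4 * √(12 * ω₁ + 5) * √t := by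
  set N := ⌈6 * ω₁ * t⌉₊ + 1
  have hN : 3 * (2 * ω₁ * t) ≤ N := by
    have := Nat.le_ceil (6 * ω₁ * t)
    push_cast [N]
    linarith
  have hN' : (2 * N + 1 : ℝ) ≤ (12 * ω₁ + 5) * t := by
    have := Nat.ceil_lt_add_one (show 0 ≤ 6 * ω₁ * t by positivity)
    push_cast [N]
    nlinarith
  have hN0 : 0 < N := Nat.succ_pos _
  have htail := cosTail_le (by positivity) hN
  have hdiff := norm_tsum_sub_sum_le V (hV.sq_mul_norm_le t) hN0
  have htrunc := hV.norm_sum_smul_pow_le t hN0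
  have hroot : 1 ≤ √(2 * N + 1) := one_le_sqrt.2 (by linarith [N.cast_nonneg (α := ℝ)])
  have htri := norm_sub_norm_le (∑' k, cosCoeff t k • V ^ k) (∑ k ∈ range N, cosCoeff t k • V ^ k)
  calc ‖∑' k, cosCoeff t k • V ^ k‖ ≤ 4 * √(2 * N + 1) := by
        nlinarith [cosTail_nonneg (2 * ω₁ * t) N]
    _ ≤ 4 * √((12 * ω₁ + 5) * t) := by gcongr
    _ = 4 * √(12 * ω₁ + 5) * √t := by rw [sqrt_mul (by positivity), mul_assoc]

end Operator

end HarmonicChain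

open HarmonicChain

theorem stmt11 (ω₁ : ℝ) (hω : 0 < ω₁)
    (V : lp (fun _ : ℤ => ℝ) ⊤ →L[ℝ] lp (fun _ : ℤ => ℝ) ⊤)
    (hV : ∀ (q : lp (fun _ : ℤ => ℝ) ⊤) (k : ℤ),
      (V q : ℤ → ℝ) k = -ω₁^2 * ((q : ℤ → ℝ) (k+1) - 2 * (q : ℤ → ℝ) k + (q : ℤ → ℝ) (k-1))) :
    ∃ b > (0:ℝ), ∀ t ≥ (0:ℝ),
      ‖∑' k : ℕ, (((-1)^k * t^(2*k) / (Nat.factorial (2*k)) : ℝ)) • V^k‖ ≤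
        b * Real.sqrt t + 1 := by
  have hV : IsNegLaplacian ω₁ V := hV
  refine ⟨4 * √(12 * ω₁ + 5) + cosTail (2 * ω₁) 1,
    add_pos_of_pos_of_nonneg (by positivity) (cosTail_nonneg _ _), fun t ht => ?_⟩
  change ‖∑' k, cosCoeff t k • V ^ k‖ ≤ _
  rcases le_total t 1 with ht1 | ht1
  · have := hV.norm_tsum_le_of_le_one ht ht1
    nlinarith [sqrt_nonneg t, sqrt_nonneg (12 * ω₁ + 5)]
  · have := hV.norm_tsum_le_of_one_le hω.le ht1
    nlinarith [sqrt_nonneg t, cosTail_nonneg (2 * ω₁) 1]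
end
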